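/- Concavity of the per-sample value function: Under the piecewise-concavity and sublinear-growth assumptions, for each i ∈ [t] the function b ↦ S_i(b) := sup { Σ_{k=1}^K α_k ℓ_k(ξ̂_i − q_k/α_k) : Σ_{k=1}^K ‖q_k‖ ≤ b, Σ_{k=1}^K α_k = 1, α_k ≥ 0 } is concave on [0,∞). -/
import Mathlib


open MeasureTheory Filter
open scoped ENNReal NNReal BigOperators RealInnerProductSpace

set_option autoImplicit false

noncomputable section

/-- `Vec d` is Euclidean space `ℝ^d`. -/
abbrev Vec (d : ℕ) := EuclideanSpace ℝ (Fin d)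


/-- Perspective-type term `α · h(ξ − q/α)`, with the liminf convention
`liminf_{α→0⁺} α · h(ξ − q/α)` at `α = 0` (which equals `0` when `q = 0`). -/
def persp {d : ℕ} (h : Vec d → ℝ) (ξ q : Vec d) (α : ℝ) : ℝ :=
  if 0 < α then α * h (ξ - α⁻¹ • q)
  else liminf (fun a : ℝ => a * h (ξ - a⁻¹ • q)) (nhdsWithin 0 (Set.Ioi 0))

/-- The perspective formulation `S_i^{old}(b)` of the per-sample subproblem. -/
def Sold {d K : ℕ} (ℓk : Fin K → Vec d → ℝ) (ξ : Vec d) (b : ℝ) : ℝ :=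
  sSup {v | ∃ (α : Fin K → ℝ) (q : Fin K → Vec d),
    (∀ k, 0 ≤ α k) ∧ ∑ k, α k = 1 ∧ ∑ k, ‖q k‖ ≤ b ∧
    v = ∑ k, persp (ℓk k) ξ (q k) (α k)}

/-- The budget formulation `S_i^{new}(b)` of the per-sample subproblem. -/
def Snew {d K : ℕ} (ℓk : Fin K → Vec d → ℝ) (ξ : Vec d) (b : ℝ) : ℝ :=
  sSup {v | ∃ (α : Fin K → ℝ) (w : Fin K → Vec d),
    (∀ k, 0 ≤ α k) ∧ ∑ k, α k = 1 ∧ ∑ k, α k * ‖w k‖ ≤ b ∧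
    v = ∑ k, α k * ℓk k (ξ - w k)}

open scoped Topology

lemma persp_pos_eq {d : ℕ} (h : Vec d → ℝ) (ξ q : Vec d) {α : ℝ} (hα : 0 < α) :
    persp h ξ q α = α * h (ξ - α⁻¹ • q) := if_pos hα

lemma persp_zero_zero {d : ℕ} (h : Vec d → ℝ) (ξ : Vec d) : persp h ξ 0 0 = 0 := by
  have ht : Tendsto (fun a : ℝ => a * h (ξ - a⁻¹ • (0 : Vec d))) (nhdsWithin 0 (Set.Ioi 0)) (𝓝 0) := by
    simp only [smul_zero, sub_zero]
    have h1 : Tendsto (fun a : ℝ => a) (nhdsWithin (0:ℝ) (Set.Ioi 0)) (𝓝 0) :=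
      tendsto_id.mono_left nhdsWithin_le_nhds
    simpa using h1.mul_const (h ξ)
  simp only [persp, lt_irrefl, if_neg (lt_irrefl (0:ℝ))]
  exact ht.liminf_eq

lemma rpow_le_one_add {c r : ℝ} (hc : 0 ≤ c) (hr : 0 < r) (hr1 : r ≤ 1) : c ^ r ≤ 1 + c := by
  rcases le_or_gt c 1 with h | h
  · have := Real.rpow_le_one hc h hr.le
    linarith
  · have := Real.rpow_le_rpow_of_exponent_le h.le hr1
    rw [Real.rpow_one] at this
    linarith

lemma persp_nonpos {d : ℕ} {h : Vec d → ℝ} {g r : ℝ} (hg : 0 < g) (hr : 0 < r) (hr1 : r < 1)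
    (hb : ∀ z, h z ≤ g * (1 + ‖z‖ ^ r)) (ξ q : Vec d) : persp h ξ q 0 ≤ 0 := by
  simp only [persp, if_neg (lt_irrefl (0:ℝ))]
  have hfB : ∀ᶠ a in nhdsWithin (0:ℝ) (Set.Ioi 0), a * h (ξ - a⁻¹ • q) ≤
      g * a + g * (a ^ (1 - r) * (a * ‖ξ‖ + ‖q‖) ^ r) := by
    filter_upwards [self_mem_nhdsWithin] with a (ha : 0 < a)
    have hc : (0:ℝ) ≤ a * ‖ξ‖ + ‖q‖ := by positivity
    have hn : ‖ξ - a⁻¹ • q‖ ≤ a⁻¹ * (a * ‖ξ‖ + ‖q‖) := by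
      have h5 := norm_sub_le ξ (a⁻¹ • q)
      rw [norm_smul, Real.norm_eq_abs, abs_of_pos (inv_pos.mpr ha)] at h5
      have heq : a⁻¹ * (a * ‖ξ‖ + ‖q‖) = ‖ξ‖ + a⁻¹ * ‖q‖ := by field_simp
      linarith
    have hrw : (a⁻¹ * (a * ‖ξ‖ + ‖q‖)) ^ r = (a ^ r)⁻¹ * (a * ‖ξ‖ + ‖q‖) ^ r := by
      rw [Real.mul_rpow (by positivity) hc, Real.inv_rpow ha.le]
    have h2 : a * (a ^ r)⁻¹ = a ^ (1 - r) := by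
      have h3 : a ^ (1 - r) * a ^ r = a := by
        rw [← Real.rpow_add ha]; norm_num
      have h4 : (0:ℝ) < a ^ r := Real.rpow_pos_of_pos ha r
      field_simp
      linarith [h3]
    calc a * h (ξ - a⁻¹ • q) ≤ a * (g * (1 + ‖ξ - a⁻¹ • q‖ ^ r)) :=
          mul_le_mul_of_nonneg_left (hb _) ha.le
      _ ≤ a * (g * (1 + (a⁻¹ * (a * ‖ξ‖ + ‖q‖)) ^ r)) := by
          have h6 := Real.rpow_le_rpow (norm_nonneg _) hn hr.le
          gcongr
      _ = g * a + g * (a ^ (1 - r) * (a * ‖ξ‖ + ‖q‖) ^ r) := by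
          rw [hrw, ← h2]; ring
  have hBt : Tendsto (fun a : ℝ => g * a + g * (a ^ (1 - r) * (a * ‖ξ‖ + ‖q‖) ^ r))
      (nhdsWithin (0:ℝ) (Set.Ioi 0)) (𝓝 0) := by
    have t1 : Tendsto (fun a : ℝ => a) (nhdsWithin (0:ℝ) (Set.Ioi 0)) (𝓝 0) :=
      tendsto_id.mono_left nhdsWithin_le_nhds
    have t2 : Tendsto (fun a : ℝ => a ^ (1 - r)) (nhdsWithin (0:ℝ) (Set.Ioi 0)) (𝓝 0) := by
      have hcont := (Real.continuousAt_rpow_const 0 (1 - r) (Or.inr (by linarith))).tendsto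
      rw [Real.zero_rpow (by linarith : (1:ℝ) - r ≠ 0)] at hcont
      exact hcont.mono_left nhdsWithin_le_nhds
    have t3 : Tendsto (fun a : ℝ => (a * ‖ξ‖ + ‖q‖) ^ r) (nhdsWithin (0:ℝ) (Set.Ioi 0))
        (𝓝 (‖q‖ ^ r)) := by
      have hc1 : ContinuousAt (fun a : ℝ => (a * ‖ξ‖ + ‖q‖) ^ r) 0 := by
        apply ContinuousAt.comp (g := fun c : ℝ => c ^ r)
        · simpa using Real.continuousAt_rpow_const ‖q‖ r (Or.inr hr.le)
        · fun_prop
      have hc2 := hc1.tendsto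
      simp only [zero_mul, zero_add] at hc2
      exact hc2.mono_left nhdsWithin_le_nhds
    have hfin := (t1.const_mul g).add (((t2.mul t3).const_mul g))
    simpa using hfin
  have key : ∀ ε : ℝ, 0 < ε → liminf (fun a : ℝ => a * h (ξ - a⁻¹ • q))
      (nhdsWithin 0 (Set.Ioi 0)) ≤ ε := by
    intro ε hε
    rw [Filter.liminf_eq]
    apply Real.sSup_le _ hε.le
    intro c hc
    have hc' : ∀ᶠ n in nhdsWithin (0:ℝ) (Set.Ioi 0), c ≤ n * h (ξ - n⁻¹ • q) := hc
    have hev : ∀ᶠ a in nhdsWithin (0:ℝ) (Set.Ioi 0), a * h (ξ - a⁻¹ • q) ≤ ε := by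
      filter_upwards [hfB, hBt.eventually (gt_mem_nhds hε)] with a h1 h2
      linarith
    obtain ⟨a, h1, h2⟩ := (hc'.and hev).exists
    linarith
  refine le_of_forall_pos_le_add fun ε hε => ?_
  have := key ε hε
  linarith

lemma persp_le {d : ℕ} {h : Vec d → ℝ} {g r : ℝ} (hg : 0 < g) (hr : 0 < r) (hr1 : r < 1)
    (hb : ∀ z, h z ≤ g * (1 + ‖z‖ ^ r)) (ξ q : Vec d) {α : ℝ} (h0 : 0 ≤ α) (h1 : α ≤ 1) :
    persp h ξ q α ≤ g * (2 + ‖ξ‖) + g * ‖q‖ := by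
  rcases h0.eq_or_lt with h0' | h0'
  · subst h0'
    have := persp_nonpos hg hr hr1 hb ξ q
    have hn : (0:ℝ) ≤ g * (2 + ‖ξ‖) + g * ‖q‖ := by positivity
    linarith
  · rw [persp_pos_eq _ _ _ h0']
    have hz : ‖ξ - α⁻¹ • q‖ ≤ ‖ξ‖ + α⁻¹ * ‖q‖ := by
      have h5 := norm_sub_le ξ (α⁻¹ • q)
      rw [norm_smul, Real.norm_eq_abs, abs_of_pos (inv_pos.mpr h0')] at h5
      exact h5
    have hpow : ‖ξ - α⁻¹ • q‖ ^ r ≤ 1 + (‖ξ‖ + α⁻¹ * ‖q‖) := by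
      calc ‖ξ - α⁻¹ • q‖ ^ r ≤ (‖ξ‖ + α⁻¹ * ‖q‖) ^ r :=
            Real.rpow_le_rpow (norm_nonneg _) hz hr.le
        _ ≤ 1 + (‖ξ‖ + α⁻¹ * ‖q‖) := rpow_le_one_add (by positivity) hr hr1.le
    have hinv : α * (α⁻¹ * ‖q‖) = ‖q‖ := by field_simp
    calc α * h (ξ - α⁻¹ • q) ≤ α * (g * (1 + ‖ξ - α⁻¹ • q‖ ^ r)) :=
          mul_le_mul_of_nonneg_left (hb _) h0'.le
      _ ≤ α * (g * (2 + ‖ξ‖ + α⁻¹ * ‖q‖)) := by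
          apply mul_le_mul_of_nonneg_left _ h0'.le
          apply mul_le_mul_of_nonneg_left _ hg.le
          linarith
      _ = g * (α * (2 + ‖ξ‖)) + g * (α * (α⁻¹ * ‖q‖)) := by ring
      _ ≤ g * (2 + ‖ξ‖) + g * ‖q‖ := by
          rw [hinv]
          have : α * (2 + ‖ξ‖) ≤ 2 + ‖ξ‖ := by nlinarith [norm_nonneg ξ]
          nlinarith

lemma persp_combine {d : ℕ} {h : Vec d → ℝ} (hc : ConcaveOn ℝ Set.univ h) (ξ : Vec d)
    {q p : Vec d} {α β a b : ℝ} (hα : 0 ≤ α) (hβ : 0 ≤ β) (ha : 0 < a) (hb : 0 < b)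
    (hq : α = 0 → q = 0) (hp : β = 0 → p = 0) :
    a * persp h ξ q α + b * persp h ξ p β ≤ persp h ξ (a • q + b • p) (a * α + b * β) := by
  rcases hα.eq_or_lt with hα' | hα' <;> rcases hβ.eq_or_lt with hβ' | hβ'
  · -- α = 0, β = 0
    rw [hq hα'.symm, hp hβ'.symm, ← hα', ← hβ']
    simp [persp_zero_zero]
  · -- α = 0, β > 0
    rw [hq hα'.symm, ← hα']
    have hbβ : 0 < b * β := mul_pos hb hβ'
    have hsum : a * 0 + b * β = b * β := by ring
    rw [hsum, persp_zero_zero, persp_pos_eq _ _ _ hβ', persp_pos_eq _ _ _ hbβ]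
    have hpt : (b * β)⁻¹ • (a • (0:Vec d) + b • p) = β⁻¹ • p := by
      rw [smul_zero, zero_add, smul_smul]
      congr 1
      field_simp
    rw [hpt]
    ring_nf
    exact le_refl _
  · -- α > 0, β = 0
    rw [hp hβ'.symm, ← hβ']
    have haα : 0 < a * α := mul_pos ha hα'
    have hsum : a * α + b * 0 = a * α := by ring
    rw [hsum, persp_zero_zero, persp_pos_eq _ _ _ hα', persp_pos_eq _ _ _ haα]
    have hpt : (a * α)⁻¹ • (a • q + b • (0:Vec d)) = α⁻¹ • q := by
      rw [smul_zero, add_zero, smul_smul]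
      congr 1
      field_simp
    rw [hpt]
    ring_nf
    exact le_refl _
  · -- α > 0, β > 0
    have hγ : 0 < a * α + b * β := by positivity
    rw [persp_pos_eq _ _ _ hα', persp_pos_eq _ _ _ hβ', persp_pos_eq _ _ _ hγ]
    have hα0 : α ≠ 0 := hα'.ne'
    have hβ0 : β ≠ 0 := hβ'.ne'
    have hγ0 : a * α + b * β ≠ 0 := hγ.ne'
    have hpt : (a * α / (a * α + b * β)) • (ξ - α⁻¹ • q) +
        (b * β / (a * α + b * β)) • (ξ - β⁻¹ • p)
        = ξ - (a * α + b * β)⁻¹ • (a • q + b • p) := by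
      match_scalars <;> field_simp <;> ring
    have hcc := hc.2 (Set.mem_univ (ξ - α⁻¹ • q)) (Set.mem_univ (ξ - β⁻¹ • p))
      (by positivity : (0:ℝ) ≤ a * α / (a * α + b * β))
      (by positivity : (0:ℝ) ≤ b * β / (a * α + b * β))
      (by field_simp)
    rw [smul_eq_mul, smul_eq_mul, hpt] at hcc
    have hmul := mul_le_mul_of_nonneg_left hcc hγ.le
    calc a * (α * h (ξ - α⁻¹ • q)) + b * (β * h (ξ - β⁻¹ • p))
        = (a * α + b * β) * (a * α / (a * α + b * β) * h (ξ - α⁻¹ • q)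
          + b * β / (a * α + b * β) * h (ξ - β⁻¹ • p)) := by
          field_simp
      _ ≤ (a * α + b * β) * h (ξ - (a * α + b * β)⁻¹ • (a • q + b • p)) := hmul

/-- **Concavity of the per-sample value function** (Lemma 13).  Under the piecewise-concavity
and sublinear-growth assumptions, the per-sample value function `b ↦ S_i(b)` is concave
on `[0, ∞)`. -/
theorem Sfun_concave
    {m K : ℕ} (hK : 0 < K)
    (ℓ : Vec m → ℝ) (ℓk : Fin K → Vec m → ℝ)
    (hpiece : ∀ ξ, ℓ ξ = ⨆ k, ℓk k ξ)
    (hconc : ∀ k, ConcaveOn ℝ Set.univ (ℓk k))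
    (hdiff : ∀ k, Differentiable ℝ (ℓk k))
    (hgrowth : ∃ g > (0:ℝ), ∃ r ∈ Set.Ioo (0:ℝ) 1, ∀ ξ, ℓ ξ ≤ g * (1 + ‖ξ‖ ^ r))
    (ξhat : Vec m) :
    ConcaveOn ℝ (Set.Ici (0:ℝ)) (fun b => Sold ℓk ξhat b) := by
  classical
  obtain ⟨g, hg, r, ⟨hr0, hr1⟩, hgrow⟩ := hgrowth
  -- growth bound for each piece
  have hbk : ∀ k z, ℓk k z ≤ g * (1 + ‖z‖ ^ r) := by
    intro k z
    refine le_trans ?_ (hgrow z)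
    rw [hpiece z]
    exact le_ciSup (Set.Finite.bddAbove (Set.finite_range fun j => ℓk j z)) k
  set SET : ℝ → Set ℝ := fun b => {v | ∃ (α : Fin K → ℝ) (q : Fin K → Vec m),
    (∀ k, 0 ≤ α k) ∧ ∑ k, α k = 1 ∧ ∑ k, ‖q k‖ ≤ b ∧
    v = ∑ k, persp (ℓk k) ξhat (q k) (α k)} with hSET
  have hSold : ∀ b, Sold ℓk ξhat b = sSup (SET b) := fun b => rfl
  have hKne : ((K:ℝ)) ≠ 0 := Nat.cast_ne_zero.mpr hK.ne'
  -- nonemptiness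
  have hne : ∀ b : ℝ, 0 ≤ b → (SET b).Nonempty := by
    intro b hb
    refine ⟨∑ k, persp (ℓk k) ξhat 0 ((K:ℝ)⁻¹), fun _ => (K:ℝ)⁻¹, fun _ => 0, ?_, ?_, ?_, rfl⟩
    · intro k; positivity
    · simp [Finset.sum_const, Finset.card_univ, hKne]
    · simpa using hb
  -- bounded above
  have hbdd : ∀ b : ℝ, 0 ≤ b → BddAbove (SET b) := by
    intro b hb
    refine ⟨(K : ℝ) * (g * (2 + ‖ξhat‖)) + g * b, ?_⟩
    rintro v ⟨α, q, hα0, hα1, hαb, rfl⟩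
    have hα1' : ∀ k, α k ≤ 1 := by
      intro k
      have := Finset.single_le_sum (fun j (_ : j ∈ Finset.univ) => hα0 j) (Finset.mem_univ k)
      rw [hα1] at this; exact this
    have hqnn : (0:ℝ) ≤ ∑ k, ‖q k‖ := Finset.sum_nonneg fun k _ => norm_nonneg _
    calc ∑ k, persp (ℓk k) ξhat (q k) (α k)
        ≤ ∑ k, (g * (2 + ‖ξhat‖) + g * ‖q k‖) :=
          Finset.sum_le_sum fun k _ => persp_le hg hr0 hr1 (hbk k) ξhat (q k) (hα0 k) (hα1' k)
      _ = (K : ℝ) * (g * (2 + ‖ξhat‖)) + g * ∑ k, ‖q k‖ := by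
          rw [Finset.sum_add_distrib, Finset.sum_const, Finset.card_univ, ← Finset.mul_sum]
          simp [nsmul_eq_mul]
      _ ≤ (K : ℝ) * (g * (2 + ‖ξhat‖)) + g * b := by
          have : g * ∑ k, ‖q k‖ ≤ g * b := mul_le_mul_of_nonneg_left hαb hg.le
          linarith
  refine ⟨convex_Ici 0, ?_⟩
  intro x hx y hy a b ha hb hab
  simp only [smul_eq_mul]
  rcases ha.eq_or_lt with ha0 | ha0
  · have hb1 : b = 1 := by linarith
    rw [← ha0, hb1]; norm_num
  rcases hb.eq_or_lt with hb0 | hb0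
  · have ha1 : a = 1 := by linarith
    rw [← hb0, ha1]; norm_num
  have hx0 : (0:ℝ) ≤ x := hx
  have hy0 : (0:ℝ) ≤ y := hy
  have hz0 : (0:ℝ) ≤ a * x + b * y := by positivity
  -- key claim
  have claim : ∀ v1 ∈ SET x, ∀ v2 ∈ SET y, a * v1 + b * v2 ≤ Sold ℓk ξhat (a * x + b * y) := by
    rintro v1 ⟨α, q, hα0, hα1, hαb, rfl⟩ v2 ⟨β, p, hβ0, hβ1, hβb, rfl⟩
    set q' : Fin K → Vec m := fun k => if α k = 0 then 0 else q k with hq'def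
    set p' : Fin K → Vec m := fun k => if β k = 0 then 0 else p k with hp'def
    have hq'0 : ∀ k, α k = 0 → q' k = 0 := fun k h => by simp [hq'def, h]
    have hp'0 : ∀ k, β k = 0 → p' k = 0 := fun k h => by simp [hp'def, h]
    have hq'n : ∑ k, ‖q' k‖ ≤ x := by
      refine le_trans (Finset.sum_le_sum fun k _ => ?_) hαb
      by_cases hk : α k = 0 <;> simp [hq'def, hk]
    have hp'n : ∑ k, ‖p' k‖ ≤ y := by
      refine le_trans (Finset.sum_le_sum fun k _ => ?_) hβb
      by_cases hk : β k = 0 <;> simp [hp'def, hk]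
    have hv1 : ∑ k, persp (ℓk k) ξhat (q k) (α k) ≤ ∑ k, persp (ℓk k) ξhat (q' k) (α k) := by
      refine Finset.sum_le_sum fun k _ => ?_
      by_cases hk : α k = 0
      · rw [hk, hq'0 k hk, persp_zero_zero]
        exact persp_nonpos hg hr0 hr1 (hbk k) ξhat (q k)
      · simp [hq'def, hk]
    have hv2 : ∑ k, persp (ℓk k) ξhat (p k) (β k) ≤ ∑ k, persp (ℓk k) ξhat (p' k) (β k) := by
      refine Finset.sum_le_sum fun k _ => ?_
      by_cases hk : β k = 0
      · rw [hk, hp'0 k hk, persp_zero_zero]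
        exact persp_nonpos hg hr0 hr1 (hbk k) ξhat (p k)
      · simp [hp'def, hk]
    have hmem : (∑ k, persp (ℓk k) ξhat (a • q' k + b • p' k) (a * α k + b * β k))
        ∈ SET (a * x + b * y) := by
      refine ⟨fun k => a * α k + b * β k, fun k => a • q' k + b • p' k, ?_, ?_, ?_, rfl⟩
      · intro k; have := hα0 k; have := hβ0 k; positivity
      · rw [Finset.sum_add_distrib, ← Finset.mul_sum, ← Finset.mul_sum, hα1, hβ1]; simp only [mul_one]; exact hab
      · calc ∑ k, ‖a • q' k + b • p' k‖ ≤ ∑ k, (a * ‖q' k‖ + b * ‖p' k‖) := by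
              refine Finset.sum_le_sum fun k _ => ?_
              refine le_trans (norm_add_le _ _) ?_
              rw [norm_smul, norm_smul, Real.norm_eq_abs, Real.norm_eq_abs,
                abs_of_pos ha0, abs_of_pos hb0]
          _ = a * ∑ k, ‖q' k‖ + b * ∑ k, ‖p' k‖ := by
              rw [Finset.sum_add_distrib, ← Finset.mul_sum, ← Finset.mul_sum]
          _ ≤ a * x + b * y := by
              have h1 : a * ∑ k, ‖q' k‖ ≤ a * x := mul_le_mul_of_nonneg_left hq'n ha0.le
              have h2 : b * ∑ k, ‖p' k‖ ≤ b * y := mul_le_mul_of_nonneg_left hp'n hb0.le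
              linarith
    calc a * ∑ k, persp (ℓk k) ξhat (q k) (α k) + b * ∑ k, persp (ℓk k) ξhat (p k) (β k)
        ≤ a * ∑ k, persp (ℓk k) ξhat (q' k) (α k) + b * ∑ k, persp (ℓk k) ξhat (p' k) (β k) := by
          have h1 := mul_le_mul_of_nonneg_left hv1 ha0.le
          have h2 := mul_le_mul_of_nonneg_left hv2 hb0.le
          linarith
      _ = ∑ k, (a * persp (ℓk k) ξhat (q' k) (α k) + b * persp (ℓk k) ξhat (p' k) (β k)) := by
          rw [Finset.sum_add_distrib, ← Finset.mul_sum, ← Finset.mul_sum]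
      _ ≤ ∑ k, persp (ℓk k) ξhat (a • q' k + b • p' k) (a * α k + b * β k) :=
          Finset.sum_le_sum fun k _ =>
            persp_combine (hconc k) ξhat (hα0 k) (hβ0 k) ha0 hb0 (hq'0 k) (hp'0 k)
      _ ≤ Sold ℓk ξhat (a * x + b * y) := le_csSup (hbdd _ hz0) hmem
  -- conclude
  have h1 : ∀ v2 ∈ SET y, a * Sold ℓk ξhat x + b * v2 ≤ Sold ℓk ξhat (a * x + b * y) := by
    intro v2 hv2
    have hs : Sold ℓk ξhat x ≤ (Sold ℓk ξhat (a * x + b * y) - b * v2) / a := by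
      rw [hSold x]
      refine csSup_le (hne x hx0) fun v1 hv1 => ?_
      rw [le_div_iff₀ ha0]
      have := claim v1 hv1 v2 hv2
      linarith
    have := (le_div_iff₀ ha0).mp hs
    linarith
  have h2 : Sold ℓk ξhat y ≤ (Sold ℓk ξhat (a * x + b * y) - a * Sold ℓk ξhat x) / b := by
    rw [hSold y]
    refine csSup_le (hne y hy0) fun v2 hv2 => ?_
    rw [le_div_iff₀ hb0]
    have := h1 v2 hv2
    linarith
  have := (le_div_iff₀ hb0).mp h2
  linarith
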